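/- arXiv:1809.01315 — 8 statements merged into one kernel-verified Lean document; each statement's English description precedes it below -/
import Mathlib

section
/- If S is a bounded, self-adjoint, positive definite invertible operator on a Hilbert space H, and S₁, S₂ are bounded, self-adjoint, positive semidefinite operators with S = S₁ + S₂, then S₁ S⁻¹ S₁ is positive semidefinite and S₁ S⁻¹ S₁ ≤ S₁. -/
/-!
With `g = S⁻¹ S₁ f` one has `⟪S₁ S⁻¹ S₁ f, f⟫ = ⟪g, S g⟫`, whose real part is nonnegative because
`S = S₁ + S₂` is. Expanding `⟪S₁ (f - g), f - g⟫` and using `S g = S₁ f` gives the exact identity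
`⟪(S₁ - S₁ S⁻¹ S₁) f, f⟫ = ⟪S₁ (f - g), f - g⟫ + ⟪S₂ g, g⟫`, a sum of two nonnegative forms.
-/

open scoped InnerProductSpace

namespace ContinuousLinearMap

variable {𝕜 E : Type*} [RCLike 𝕜] [SeminormedAddCommGroup E] [InnerProductSpace 𝕜 E]

theorem inner_sub_comp_comp_apply_self_eq (A B R : E →L[𝕜] E)
    (hR : (A + B).comp R = ContinuousLinearMap.id 𝕜 E) (f : E) :
    ⟪(A - A.comp (R.comp A)) f, f⟫_𝕜 =
      ⟪A (f - R (A f)), f - R (A f)⟫_𝕜 + ⟪B (R (A f)), R (A f)⟫_𝕜 := by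
  set g := R (A f)
  have hg : A g + B g = A f := by simpa using DFunLike.congr_fun hR (A f)
  have hAfg : ⟪A f, g⟫_𝕜 = ⟪A g, g⟫_𝕜 + ⟪B g, g⟫_𝕜 := by rw [← hg, inner_add_left]
  simp only [sub_apply, comp_apply, map_sub, inner_sub_left, inner_sub_right, hAfg]
  ring

theorem re_inner_comp_comp_apply_self_nonneg (A B R : E →L[𝕜] E) (hA : (A : E →ₗ[𝕜] E).IsSymmetric)
    (hA_nonneg : ∀ x, 0 ≤ RCLike.re ⟪A x, x⟫_𝕜) (hB_nonneg : ∀ x, 0 ≤ RCLike.re ⟪B x, x⟫_𝕜)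
    (hR : (A + B).comp R = ContinuousLinearMap.id 𝕜 E) (f : E) :
    0 ≤ RCLike.re ⟪(A.comp (R.comp A)) f, f⟫_𝕜 := by
  set g := R (A f)
  have hg : A g + B g = A f := by simpa using DFunLike.congr_fun hR (A f)
  calc 0 ≤ RCLike.re ⟪A g, g⟫_𝕜 + RCLike.re ⟪B g, g⟫_𝕜 := add_nonneg (hA_nonneg g) (hB_nonneg g)
    _ = RCLike.re ⟪g, A f⟫_𝕜 := by rw [← map_add, ← inner_add_left, hg, inner_re_symm]
    _ = RCLike.re ⟪(A.comp (R.comp A)) f, f⟫_𝕜 :=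
      congrArg RCLike.re (hA g f).symm

theorem re_inner_sub_comp_comp_apply_self_nonneg (A B R : E →L[𝕜] E)
    (hA_nonneg : ∀ x, 0 ≤ RCLike.re ⟪A x, x⟫_𝕜) (hB_nonneg : ∀ x, 0 ≤ RCLike.re ⟪B x, x⟫_𝕜)
    (hR : (A + B).comp R = ContinuousLinearMap.id 𝕜 E) (f : E) :
    0 ≤ RCLike.re ⟪(A - A.comp (R.comp A)) f, f⟫_𝕜 := by
  rw [inner_sub_comp_comp_apply_self_eq A B R hR, map_add]
  exact add_nonneg (hA_nonneg _) (hB_nonneg _)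

end ContinuousLinearMap

theorem stmt0_general {H : Type*} [NormedAddCommGroup H] [InnerProductSpace ℂ H] [CompleteSpace H]
    (S Sinv S₁ S₂ : H →L[ℂ] H)
    (hS1_sa : IsSelfAdjoint S₁)
    (hinv1 : S.comp Sinv = ContinuousLinearMap.id ℂ H)
    (hS1_pos : ∀ f : H, 0 ≤ (⟪S₁ f, f⟫_ℂ).re) (hS2_pos : ∀ f : H, 0 ≤ (⟪S₂ f, f⟫_ℂ).re)
    (hsum : S = S₁ + S₂) :
    (∀ f : H, 0 ≤ (⟪(S₁.comp (Sinv.comp S₁)) f, f⟫_ℂ).re) ∧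
    (∀ f : H, 0 ≤ (⟪((S₁) - (S₁.comp (Sinv.comp S₁))) f, f⟫_ℂ).re) := by
  subst hsum
  exact ⟨ContinuousLinearMap.re_inner_comp_comp_apply_self_nonneg S₁ S₂ Sinv hS1_sa.isSymmetric
      hS1_pos hS2_pos hinv1,
    ContinuousLinearMap.re_inner_sub_comp_comp_apply_self_nonneg S₁ S₂ Sinv hS1_pos hS2_pos hinv1⟩

theorem stmt0 {H : Type*} [NormedAddCommGroup H] [InnerProductSpace ℂ H] [CompleteSpace H]
    (S Sinv S₁ S₂ : H →L[ℂ] H)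
    (hS_sa : IsSelfAdjoint S) (hS1_sa : IsSelfAdjoint S₁) (hS2_sa : IsSelfAdjoint S₂)
    (hS_pd : ∃ c > 0, ∀ f : H, c * ‖f‖ ^ 2 ≤ (⟪S f, f⟫_ℂ).re)
    (hinv1 : S.comp Sinv = ContinuousLinearMap.id ℂ H)
    (hinv2 : Sinv.comp S = ContinuousLinearMap.id ℂ H)
    (hS1_pos : ∀ f : H, 0 ≤ (⟪S₁ f, f⟫_ℂ).re) (hS2_pos : ∀ f : H, 0 ≤ (⟪S₂ f, f⟫_ℂ).re)
    (hsum : S = S₁ + S₂) :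
    (∀ f : H, 0 ≤ (⟪(S₁.comp (Sinv.comp S₁)) f, f⟫_ℂ).re) ∧
    (∀ f : H, 0 ≤ (⟪((S₁) - (S₁.comp (Sinv.comp S₁))) f, f⟫_ℂ).re) :=
  stmt0_general S Sinv S₁ S₂ hS1_sa hinv1 hS1_pos hS2_pos hsum
end

section
/- If S is a bounded, self-adjoint, positive definite invertible operator on a Hilbert space H, and S₁, S₂ are bounded, self-adjoint, positive semidefinite operators with S = S₁ + S₂, then S₂ + S₁ S⁻¹ S₁ ≤ S. -/
open scoped InnerProductSpace ComplexConjugate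

/-! For `u = S⁻¹ S₁ f`, positivity of `S₁` at `f - u` and of `S₂` at `u` add up to
`0 ≤ ⟪S₁ f, f⟫ - 2 Re ⟪S₁ f, u⟫ + ⟪S u, u⟫ = ⟪S₁ f, f⟫ - Re ⟪S₁ u, f⟫`, since `S u = S₁ f`;
and `⟪S₁ f, f⟫ - ⟪S₁ u, f⟫` is exactly the quadratic form of `S - S₂ - S₁ S⁻¹ S₁` at `f`. -/

open RCLike

theorem LinearMap.IsSymmetric.re_inner_apply_le_of_add_apply_eq
    {𝕜 E : Type*} [RCLike 𝕜] [SeminormedAddCommGroup E] [InnerProductSpace 𝕜 E]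
    {T₁ T₂ : E →ₗ[𝕜] E} (hT₁ : T₁.IsSymmetric)
    (hT₁_nonneg : ∀ x, 0 ≤ re ⟪T₁ x, x⟫_𝕜) (hT₂_nonneg : ∀ x, 0 ≤ re ⟪T₂ x, x⟫_𝕜)
    {f u : E} (hu : (T₁ + T₂) u = T₁ f) :
    re ⟪T₁ u, f⟫_𝕜 ≤ re ⟪T₁ f, f⟫_𝕜 := by
  have h_sym : re ⟪T₁ u, f⟫_𝕜 = re ⟪T₁ f, u⟫_𝕜 := by
    rw [hT₁ u f, inner_re_symm]
  have h_sum : re ⟪T₁ u, u⟫_𝕜 + re ⟪T₂ u, u⟫_𝕜 = re ⟪T₁ f, u⟫_𝕜 := by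
    rw [← map_add, ← inner_add_left, ← LinearMap.add_apply, hu]
  have h_expand : re ⟪T₁ (f - u), f - u⟫_𝕜
      = re ⟪T₁ f, f⟫_𝕜 - re ⟪T₁ f, u⟫_𝕜 - re ⟪T₁ u, f⟫_𝕜 + re ⟪T₁ u, u⟫_𝕜 := by
    simp only [map_sub, inner_sub_left, inner_sub_right]
    ring
  linarith [hT₁_nonneg (f - u), hT₂_nonneg u]

theorem stmt1_general {H : Type*} [NormedAddCommGroup H] [InnerProductSpace ℂ H] [CompleteSpace H]
    (S Sinv S₁ S₂ : H →L[ℂ] H)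
    (hS1_sa : IsSelfAdjoint S₁)
    (hinv1 : S.comp Sinv = ContinuousLinearMap.id ℂ H)
    (hS1_pos : ∀ f : H, 0 ≤ (⟪S₁ f, f⟫_ℂ).re) (hS2_pos : ∀ f : H, 0 ≤ (⟪S₂ f, f⟫_ℂ).re)
    (hsum : S = S₁ + S₂) :
    (∀ f : H, 0 ≤ (⟪((S) - (S₂ + S₁.comp (Sinv.comp S₁))) f, f⟫_ℂ).re) := by
  intro f
  have hu : ((S₁ : H →ₗ[ℂ] H) + S₂) (Sinv (S₁ f)) = S₁ f := by
    rw [hsum] at hinv1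
    exact DFunLike.congr_fun hinv1 (S₁ f)
  have h_le := hS1_sa.isSymmetric.re_inner_apply_le_of_add_apply_eq hS1_pos hS2_pos hu
  have h_apply : (S - (S₂ + S₁.comp (Sinv.comp S₁))) f = S₁ f - S₁ (Sinv (S₁ f)) := by
    simp only [hsum, sub_apply, add_apply, ContinuousLinearMap.comp_apply]
    abel
  rw [h_apply, inner_sub_left, Complex.sub_re, sub_nonneg]
  exact h_le

theorem stmt1 {H : Type*} [NormedAddCommGroup H] [InnerProductSpace ℂ H] [CompleteSpace H]
    (S Sinv S₁ S₂ : H →L[ℂ] H)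
    (hS_sa : IsSelfAdjoint S) (hS1_sa : IsSelfAdjoint S₁) (hS2_sa : IsSelfAdjoint S₂)
    (hS_pd : ∃ c > 0, ∀ f : H, c * ‖f‖ ^ 2 ≤ (⟪S f, f⟫_ℂ).re)
    (hinv1 : S.comp Sinv = ContinuousLinearMap.id ℂ H)
    (hinv2 : Sinv.comp S = ContinuousLinearMap.id ℂ H)
    (hS1_pos : ∀ f : H, 0 ≤ (⟪S₁ f, f⟫_ℂ).re) (hS2_pos : ∀ f : H, 0 ≤ (⟪S₂ f, f⟫_ℂ).re)
    (hsum : S = S₁ + S₂) :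
    (∀ f : H, 0 ≤ (⟪((S) - (S₂ + S₁.comp (Sinv.comp S₁))) f, f⟫_ℂ).re) :=
  stmt1_general S Sinv S₁ S₂ hS1_sa hinv1 hS1_pos hS2_pos hsum
end

section
/- If S is a bounded, self-adjoint, positive definite invertible operator on a Hilbert space H, and S₁, S₂ are bounded, self-adjoint, positive semidefinite operators with S = S₁ + S₂, then S₁ S⁻¹ S₁ + S₂ S⁻¹ S₂ ≤ S. -/
/-!
Put `a = S⁻¹ S₁ f` and `b = S⁻¹ S₂ f`, so that `a + b = f`. Since `S a = S₁ f`, splitting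
`S = S₁ + S₂` gives `S₂ a = S₁ b =: g`, and the defect `(S - S₁ S⁻¹ S₁ - S₂ S⁻¹ S₂) f` equals
`S₂ a + S₁ b = 2 g`. Hence `⟪(S - S₁ S⁻¹ S₁ - S₂ S⁻¹ S₂) f, f⟫ = 2 (⟪S₂ a, a⟫ + ⟪S₁ b, b⟫)`,
whose real part is nonnegative when `S₁` and `S₂` are positive.
-/

open scoped InnerProductSpace

section Ring

variable {R : Type*} [Ring R] {s t s₁ s₂ : R}

theorem mul_mul_swap_of_mul_eq_one_of_eq_add (hst : s * t = 1) (hts : t * s = 1)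
    (hs : s = s₁ + s₂) : s₂ * t * s₁ = s₁ * t * s₂ := by
  have h₁ : s₂ * t * s₁ = s₂ - s₂ * t * s₂ := by
    rw [eq_sub_iff_add_eq, mul_assoc, mul_assoc, ← mul_add, ← mul_add, ← hs, hts, mul_one]
  have h₂ : s₁ * t * s₂ = s₂ - s₂ * t * s₂ := by
    rw [eq_sub_iff_add_eq, ← add_mul, ← add_mul, ← hs, hst, one_mul]
  rw [h₁, h₂]

theorem sub_mul_mul_add_mul_mul_of_mul_eq_one_of_eq_add (hts : t * s = 1) (hs : s = s₁ + s₂) :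
    s - (s₁ * t * s₁ + s₂ * t * s₂) = s₂ * t * s₁ + s₁ * t * s₂ := by
  have hexpand : s = s₁ * t * s₁ + s₂ * t * s₂ + (s₂ * t * s₁ + s₁ * t * s₂) :=
    calc s = s * (t * s) := by rw [hts, mul_one]
      _ = _ := by rw [hs]; noncomm_ring
  rw [sub_eq_iff_eq_add', ← hexpand]

end Ring

namespace ContinuousLinearMap

variable {𝕜 E : Type*} [RCLike 𝕜] [NormedAddCommGroup E] [InnerProductSpace 𝕜 E]
  {S T S₁ S₂ : E →L[𝕜] E}

theorem inner_sub_mul_mul_add_mul_mul_apply_self (hST : S * T = 1) (hTS : T * S = 1)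
    (hS : S = S₁ + S₂) (f : E) :
    ⟪(S - (S₁ * T * S₁ + S₂ * T * S₂)) f, f⟫_𝕜 =
      2 * (⟪S₂ (T (S₁ f)), T (S₁ f)⟫_𝕜 + ⟪S₁ (T (S₂ f)), T (S₂ f)⟫_𝕜) := by
  set a := T (S₁ f)
  set b := T (S₂ f)
  have hf : f = a + b := by
    rw [← map_add, ← add_apply, ← hS]
    exact congr($hTS f).symm
  have hg : S₂ a = S₁ b := congr($(mul_mul_swap_of_mul_eq_one_of_eq_add hST hTS hS) f)
  have hdefect : (S - (S₁ * T * S₁ + S₂ * T * S₂)) f = S₂ a + S₁ b := by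
    rw [sub_mul_mul_add_mul_mul_of_mul_eq_one_of_eq_add hTS hS]
    rfl
  rw [hdefect, hf, inner_add_left, inner_add_right, inner_add_right, ← hg]
  ring

theorem re_inner_sub_mul_mul_add_mul_mul_apply_self_nonneg (hST : S * T = 1) (hTS : T * S = 1)
    (hS : S = S₁ + S₂) (hS₁ : ∀ x, 0 ≤ RCLike.re ⟪S₁ x, x⟫_𝕜)
    (hS₂ : ∀ x, 0 ≤ RCLike.re ⟪S₂ x, x⟫_𝕜) (f : E) :
    0 ≤ RCLike.re ⟪(S - (S₁ * T * S₁ + S₂ * T * S₂)) f, f⟫_𝕜 := by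
  rw [inner_sub_mul_mul_add_mul_mul_apply_self hST hTS hS, RCLike.ofNat_mul_re, map_add]
  have := hS₂ (T (S₁ f))
  have := hS₁ (T (S₂ f))
  positivity

end ContinuousLinearMap

theorem stmt2_general {H : Type*} [NormedAddCommGroup H] [InnerProductSpace ℂ H]
    (S Sinv S₁ S₂ : H →L[ℂ] H)
    (hinv1 : S.comp Sinv = ContinuousLinearMap.id ℂ H)
    (hinv2 : Sinv.comp S = ContinuousLinearMap.id ℂ H)
    (hS1_pos : ∀ f : H, 0 ≤ (⟪S₁ f, f⟫_ℂ).re) (hS2_pos : ∀ f : H, 0 ≤ (⟪S₂ f, f⟫_ℂ).re)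
    (hsum : S = S₁ + S₂) :
    (∀ f : H, 0 ≤ (⟪((S) - (S₁.comp (Sinv.comp S₁) + S₂.comp (Sinv.comp S₂))) f, f⟫_ℂ).re) := by
  intro f
  have h := ContinuousLinearMap.re_inner_sub_mul_mul_add_mul_mul_apply_self_nonneg hinv1 hinv2
    hsum hS1_pos hS2_pos f
  rwa [mul_assoc, mul_assoc] at h

theorem stmt2 {H : Type*} [NormedAddCommGroup H] [InnerProductSpace ℂ H] [CompleteSpace H]
    (S Sinv S₁ S₂ : H →L[ℂ] H)
    (hS_sa : IsSelfAdjoint S) (hS1_sa : IsSelfAdjoint S₁) (hS2_sa : IsSelfAdjoint S₂)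
    (hS_pd : ∃ c > 0, ∀ f : H, c * ‖f‖ ^ 2 ≤ (⟪S f, f⟫_ℂ).re)
    (hinv1 : S.comp Sinv = ContinuousLinearMap.id ℂ H)
    (hinv2 : Sinv.comp S = ContinuousLinearMap.id ℂ H)
    (hS1_pos : ∀ f : H, 0 ≤ (⟪S₁ f, f⟫_ℂ).re) (hS2_pos : ∀ f : H, 0 ≤ (⟪S₂ f, f⟫_ℂ).re)
    (hsum : S = S₁ + S₂) :
    (∀ f : H, 0 ≤ (⟪((S) - (S₁.comp (Sinv.comp S₁) + S₂.comp (Sinv.comp S₂))) f, f⟫_ℂ).re) :=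
  stmt2_general S Sinv S₁ S₂ hinv1 hinv2 hS1_pos hS2_pos hsum
end

section
/- Let S be bounded, self-adjoint, positive definite and invertible, and S₁, S₂ bounded, self-adjoint, positive semidefinite with S = S₁ + S₂. If p, q ∈ ℝ satisfy a² − a(1 + p) + q + p ≥ 0 for all a ∈ [0,1], then S₁ − S₁ S⁻¹ S₁ ≤ p·S₂ + q·S. -/
open scoped InnerProductSpace ComplexConjugate

/-!
Write `x = re ⟪S f, f⟫`, `y = re ⟪S₁ f, f⟫` and `g = S⁻¹ S₁ f`. Symmetry gives
`⟪S₁ S⁻¹ S₁ f, f⟫ = ⟪S g, g⟫` and `⟪S g, f⟫ = ⟪S₁ f, f⟫`, so the Cauchy–Schwarz inequality for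
the positive form `⟪S ·, ·⟫` yields `y² ≤ x ⟪S₁ S⁻¹ S₁ f, f⟫`. Consequently the quadratic form of
`p S₂ + q S - (S₁ - S₁ S⁻¹ S₁)` at `f` is at least `x (a² - a (1 + p) + q + p)` with
`a = y / x ∈ [0, 1]`.
-/

open RCLike

namespace LinearMap.IsPositive

variable {𝕜 E : Type*} [RCLike 𝕜] [NormedAddCommGroup E] [InnerProductSpace 𝕜 E]
  {T : E →ₗ[𝕜] E}

abbrev preInnerProductCore (hT : T.IsPositive) : PreInnerProductSpace.Core 𝕜 E where
  inner x y := ⟪T x, y⟫_𝕜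
  conj_inner_symm x y := by rw [inner_conj_symm, hT.isSymmetric]
  re_inner_nonneg := hT.re_inner_nonneg_left
  add_left x y z := by simp only [map_add, inner_add_left]
  smul_left x y r := by simp only [map_smul, inner_smul_left]

theorem norm_inner_mul_norm_inner_le (hT : T.IsPositive) (x y : E) :
    ‖⟪T x, y⟫_𝕜‖ * ‖⟪T y, x⟫_𝕜‖ ≤ re ⟪T x, x⟫_𝕜 * re ⟪T y, y⟫_𝕜 :=
  @InnerProductSpace.Core.inner_mul_inner_self_le 𝕜 E _ _ _ hT.preInnerProductCore x y

theorem sq_re_inner_le (hT : T.IsPositive) (x y : E) :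
    re ⟪T x, y⟫_𝕜 ^ 2 ≤ re ⟪T x, x⟫_𝕜 * re ⟪T y, y⟫_𝕜 := by
  have hsymm : ‖⟪T y, x⟫_𝕜‖ = ‖⟪T x, y⟫_𝕜‖ := by
    rw [hT.isSymmetric, ← inner_conj_symm, norm_conj]
  calc re ⟪T x, y⟫_𝕜 ^ 2 ≤ ‖⟪T x, y⟫_𝕜‖ ^ 2 := by
        rw [← sq_abs]; gcongr; exact abs_re_le_norm _
    _ = ‖⟪T x, y⟫_𝕜‖ * ‖⟪T y, x⟫_𝕜‖ := by rw [hsymm, sq]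
    _ ≤ _ := hT.norm_inner_mul_norm_inner_le x y

end LinearMap.IsPositive

namespace ContinuousLinearMap

variable {𝕜 E : Type*} [RCLike 𝕜] [NormedAddCommGroup E] [InnerProductSpace 𝕜 E]
  {S R A : E →L[𝕜] E}

theorem inner_comp_rightInverse_comp_apply_self (hS : S.IsSymmetric) (hA : A.IsSymmetric)
    (hSR : Function.RightInverse R S) (x : E) :
    ⟪(A ∘L R ∘L A) x, x⟫_𝕜 = ⟪S (R (A x)), R (A x)⟫_𝕜 := by
  calc ⟪A (R (A x)), x⟫_𝕜 = ⟪R (A x), A x⟫_𝕜 := hA _ _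
    _ = ⟪R (A x), S (R (A x))⟫_𝕜 := by rw [hSR]
    _ = ⟪S (R (A x)), R (A x)⟫_𝕜 := (hS _ _).symm

theorem sq_re_inner_le_mul_re_inner_comp_rightInverse_comp (hS : S.IsPositive)
    (hA : A.IsSymmetric) (hSR : Function.RightInverse R S) (x : E) :
    re ⟪A x, x⟫_𝕜 ^ 2 ≤ re ⟪S x, x⟫_𝕜 * re ⟪(A ∘L R ∘L A) x, x⟫_𝕜 := by
  have := hS.toLinearMap.sq_re_inner_le (R (A x)) x
  rw [inner_comp_rightInverse_comp_apply_self hS.isSymmetric hA hSR]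
  simpa [hSR _, mul_comm] using this

end ContinuousLinearMap

theorem nonneg_of_forall_mem_Icc_quadratic_nonneg {p q x y z : ℝ}
    (hpq : ∀ a ∈ Set.Icc (0 : ℝ) 1, 0 ≤ a ^ 2 - a * (1 + p) + q + p)
    (hy : 0 ≤ y) (hyx : y ≤ x) (hz : 0 ≤ z) (hyz : y ^ 2 ≤ x * z) :
    0 ≤ p * (x - y) + q * x - y + z := by
  rcases (hy.trans hyx).eq_or_lt with rfl | hx
  · obtain rfl : y = 0 := le_antisymm hyx hy
    linarith
  · have ha := hpq (y / x) ⟨div_nonneg hy hx.le, (div_le_one hx).mpr hyx⟩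
    calc 0 ≤ x * ((y / x) ^ 2 - y / x * (1 + p) + q + p) := mul_nonneg hx.le ha
      _ = p * (x - y) + q * x - y + y ^ 2 / x := by field_simp; ring
      _ ≤ p * (x - y) + q * x - y + z := by gcongr; exact (div_le_iff₀' hx).mpr hyz

theorem stmt5_general {H : Type*} [NormedAddCommGroup H] [InnerProductSpace ℂ H] [CompleteSpace H]
    (S Sinv S₁ S₂ : H →L[ℂ] H)
    (hS1_sa : IsSelfAdjoint S₁) (hS2_sa : IsSelfAdjoint S₂)
    (hinv1 : S.comp Sinv = ContinuousLinearMap.id ℂ H)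
    (hS1_pos : ∀ f : H, 0 ≤ (⟪S₁ f, f⟫_ℂ).re) (hS2_pos : ∀ f : H, 0 ≤ (⟪S₂ f, f⟫_ℂ).re)
    (hsum : S = S₁ + S₂)
    (p q : ℝ) (hpq : ∀ a ∈ Set.Icc (0:ℝ) 1, 0 ≤ a ^ 2 - a * (1 + p) + q + p) :
    (∀ f : H, 0 ≤ (⟪(((p : ℂ) • S₂ + (q : ℂ) • S) - (S₁ - S₁.comp (Sinv.comp S₁))) f, f⟫_ℂ).re) := by
  open ContinuousLinearMap in
  have hS₁ : S₁.IsPositive := isPositive_def'.2 ⟨hS1_sa, hS1_pos⟩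
  have hS₂ : S₂.IsPositive := isPositive_def'.2 ⟨hS2_sa, hS2_pos⟩
  have hS : S.IsPositive := hsum ▸ hS₁.add hS₂
  have hSinv : Function.RightInverse Sinv S := fun y => congr($hinv1 y)
  intro f
  have hsplit : re ⟪S f, f⟫_ℂ = re ⟪S₁ f, f⟫_ℂ + re ⟪S₂ f, f⟫_ℂ := by
    rw [hsum, add_apply, inner_add_left, map_add]
  have hSchur := nonneg_of_forall_mem_Icc_quadratic_nonneg hpq (hS₁.re_inner_nonneg_left f)
    (hsplit ▸ le_add_of_nonneg_right (hS₂.re_inner_nonneg_left f))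
    (inner_comp_rightInverse_comp_apply_self hS.isSymmetric hS₁.isSymmetric hSinv f ▸
      hS.re_inner_nonneg_left _)
    (sq_re_inner_le_mul_re_inner_comp_rightInverse_comp hS hS₁.isSymmetric hSinv f)
  simp only [sub_apply, add_apply, smul_apply, comp_apply, inner_sub_left, inner_add_left,
    inner_smul_left, Complex.conj_ofReal, Complex.sub_re, Complex.add_re, Complex.re_ofReal_mul,
    re_to_complex] at hsplit hSchur ⊢
  linear_combination hSchur + p * hsplit

theorem stmt5 {H : Type*} [NormedAddCommGroup H] [InnerProductSpace ℂ H] [CompleteSpace H]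
    (S Sinv S₁ S₂ : H →L[ℂ] H)
    (hS_sa : IsSelfAdjoint S) (hS1_sa : IsSelfAdjoint S₁) (hS2_sa : IsSelfAdjoint S₂)
    (hS_pd : ∃ c > 0, ∀ f : H, c * ‖f‖ ^ 2 ≤ (⟪S f, f⟫_ℂ).re)
    (hinv1 : S.comp Sinv = ContinuousLinearMap.id ℂ H)
    (hinv2 : Sinv.comp S = ContinuousLinearMap.id ℂ H)
    (hS1_pos : ∀ f : H, 0 ≤ (⟪S₁ f, f⟫_ℂ).re) (hS2_pos : ∀ f : H, 0 ≤ (⟪S₂ f, f⟫_ℂ).re)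
    (hsum : S = S₁ + S₂)
    (p q : ℝ) (hpq : ∀ a ∈ Set.Icc (0:ℝ) 1, 0 ≤ a ^ 2 - a * (1 + p) + q + p) :
    (∀ f : H, 0 ≤ (⟪(((p : ℂ) • S₂ + (q : ℂ) • S) - (S₁ - S₁.comp (Sinv.comp S₁))) f, f⟫_ℂ).re) :=
  stmt5_general S Sinv S₁ S₂ hS1_sa hS2_sa hinv1 hS1_pos hS2_pos hsum p q hpq
end

section
/- Let S be bounded, self-adjoint, positive definite and invertible, and S₁, S₂ bounded, self-adjoint, positive semidefinite with S = S₁ + S₂. If p, q ∈ ℝ satisfy a² + a((q − p)/2 − 1) + (1 − q)/2 ≥ 0 for all a ∈ [0,1], then p·S₁ + q·S₂ ≤ S₁ S⁻¹ S₁ + S₂ S⁻¹ S₂. -/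
open scoped InnerProductSpace

/-!
Fix `f` and put `X = re ⟪S₁ f, f⟫`, `W = re ⟪S₂ f, f⟫`, so that `re ⟪S f, f⟫ = X + W`.
Since `S = S₁ + S₂` is positive, so is `S⁻¹`, and Cauchy–Schwarz for the form `⟪S⁻¹ ·, ·⟫`,
applied to `Sᵢ f` and `S f`, gives `X² ≤ re ⟪S₁ S⁻¹ S₁ f, f⟫ (X + W)` and likewise
for `S₂`. With `a = X / (X + W) ∈ [0, 1]`,
`X² + W² - (p X + q W) (X + W) = 2 (X + W)² (a² + a ((q - p) / 2 - 1) + (1 - q) / 2) ≥ 0`.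
-/

namespace ContinuousLinearMap

theorem IsPositive.re_inner_sq_le {𝕜 E : Type*} [RCLike 𝕜] [NormedAddCommGroup E]
    [InnerProductSpace 𝕜 E] {T : E →L[𝕜] E} (hT : T.IsPositive) (x y : E) :
    RCLike.re ⟪T x, y⟫_𝕜 ^ 2 ≤ RCLike.re ⟪T x, x⟫_𝕜 * RCLike.re ⟪T y, y⟫_𝕜 := by
  have hquad : ∀ t : ℝ, 0 ≤ RCLike.re ⟪T y, y⟫_𝕜 * (t * t) + 2 * RCLike.re ⟪T x, y⟫_𝕜 * t
      + RCLike.re ⟪T x, x⟫_𝕜 := by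
    intro t
    have hyx : RCLike.re ⟪T y, x⟫_𝕜 = RCLike.re ⟪T x, y⟫_𝕜 := by
      rw [hT.inner_left_eq_inner_right, ← inner_conj_symm, RCLike.conj_re]
    have := hT.re_inner_nonneg_left (x + (t : 𝕜) • y)
    simp only [map_add, map_smul, inner_add_left, inner_add_right, inner_smul_left,
      inner_smul_right, RCLike.conj_ofReal, RCLike.re_ofReal_mul, hyx] at this
    linarith
  have := discrim_le_zero hquad
  rw [discrim] at this
  nlinarith

variable {H : Type*} [NormedAddCommGroup H] [InnerProductSpace ℂ H] [CompleteSpace H]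
  {S Sinv : H →L[ℂ] H}

theorem IsPositive.inverse (hS : S.IsPositive) (hinv1 : S.comp Sinv = .id ℂ H)
    (hinv2 : Sinv.comp S = .id ℂ H) : Sinv.IsPositive := by
  let u : (H →L[ℂ] H)ˣ := ⟨S, Sinv, hinv1, hinv2⟩
  rw [← nonneg_iff_isPositive] at hS ⊢
  exact CFC.inv_nonneg_of_nonneg u hS

theorem IsPositive.re_inner_sq_le_inverse (hS : S.IsPositive) (hinv1 : S.comp Sinv = .id ℂ H)
    (hinv2 : Sinv.comp S = .id ℂ H) (T : H →L[ℂ] H) (f : H) :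
    (⟪T f, f⟫_ℂ).re ^ 2 ≤ (⟪Sinv (T f), T f⟫_ℂ).re * (⟪S f, f⟫_ℂ).re := by
  have hSinvS : Sinv (S f) = f := congr($hinv2 f)
  have hSinv := hS.inverse hinv1 hinv2
  have := hSinv.re_inner_sq_le (T f) (S f)
  rwa [hSinv.inner_left_eq_inner_right, hSinvS, ← hS.inner_left_eq_inner_right] at this

end ContinuousLinearMap

theorem mul_add_mul_mul_le_sq_add_sq {p q X W : ℝ}
    (hpq : ∀ a ∈ Set.Icc (0:ℝ) 1, 0 ≤ a ^ 2 + a * ((q - p) / 2 - 1) + (1 - q) / 2)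
    (hX : 0 ≤ X) (hW : 0 ≤ W) : (p * X + q * W) * (X + W) ≤ X ^ 2 + W ^ 2 := by
  rcases (add_nonneg hX hW).eq_or_lt with hs | hs
  · rw [← hs, mul_zero]
    positivity
  set a := X / (X + W)
  have ha : a ∈ Set.Icc (0:ℝ) 1 :=
    ⟨div_nonneg hX hs.le, (div_le_one hs).2 (le_add_of_nonneg_right hW)⟩
  have hgap : X ^ 2 + W ^ 2 - (p * X + q * W) * (X + W)
      = 2 * (X + W) ^ 2 * (a ^ 2 + a * ((q - p) / 2 - 1) + (1 - q) / 2) := by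
    simp only [a]
    field_simp
    ring
  have := mul_nonneg (by positivity : (0:ℝ) ≤ 2 * (X + W) ^ 2) (hpq a ha)
  linarith

theorem mul_add_mul_le_add_of_sq_le_mul {p q X W Y₁ Y₂ : ℝ}
    (hpq : ∀ a ∈ Set.Icc (0:ℝ) 1, 0 ≤ a ^ 2 + a * ((q - p) / 2 - 1) + (1 - q) / 2)
    (hX : 0 ≤ X) (hW : 0 ≤ W) (hY₁ : 0 ≤ Y₁) (hY₂ : 0 ≤ Y₂)
    (h₁ : X ^ 2 ≤ Y₁ * (X + W)) (h₂ : W ^ 2 ≤ Y₂ * (X + W)) : p * X + q * W ≤ Y₁ + Y₂ := by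
  rcases (add_nonneg hX hW).eq_or_lt with hs | hs
  · obtain ⟨rfl, rfl⟩ : X = 0 ∧ W = 0 := ⟨by linarith, by linarith⟩
    linarith
  refine le_of_mul_le_mul_right ?_ hs
  calc (p * X + q * W) * (X + W) ≤ X ^ 2 + W ^ 2 := mul_add_mul_mul_le_sq_add_sq hpq hX hW
    _ ≤ (Y₁ + Y₂) * (X + W) := by linarith

theorem stmt6_general {H : Type*} [NormedAddCommGroup H] [InnerProductSpace ℂ H] [CompleteSpace H]
    (S Sinv S₁ S₂ : H →L[ℂ] H)
    (hS1_sa : IsSelfAdjoint S₁) (hS2_sa : IsSelfAdjoint S₂)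
    (hinv1 : S.comp Sinv = ContinuousLinearMap.id ℂ H)
    (hinv2 : Sinv.comp S = ContinuousLinearMap.id ℂ H)
    (hS1_pos : ∀ f : H, 0 ≤ (⟪S₁ f, f⟫_ℂ).re) (hS2_pos : ∀ f : H, 0 ≤ (⟪S₂ f, f⟫_ℂ).re)
    (hsum : S = S₁ + S₂)
    (p q : ℝ) (hpq : ∀ a ∈ Set.Icc (0:ℝ) 1, 0 ≤ a ^ 2 + a * ((q - p) / 2 - 1) + (1 - q) / 2) :
    (∀ f : H, 0 ≤ (⟪((S₁.comp (Sinv.comp S₁) + S₂.comp (Sinv.comp S₂)) - ((p : ℂ) • S₁ + (q : ℂ) • S₂)) f, f⟫_ℂ).re) := by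
  intro f
  have hS₁ : S₁.IsPositive := ⟨hS1_sa.isSymmetric, hS1_pos⟩
  have hS₂ : S₂.IsPositive := ⟨hS2_sa.isSymmetric, hS2_pos⟩
  have hS : S.IsPositive := hsum ▸ hS₁.add hS₂
  have hSinv := hS.inverse hinv1 hinv2
  have hs : (⟪S f, f⟫_ℂ).re = (⟪S₁ f, f⟫_ℂ).re + (⟪S₂ f, f⟫_ℂ).re := by
    rw [hsum, add_apply, inner_add_left, Complex.add_re]
  have hexpand : (⟪((S₁.comp (Sinv.comp S₁) + S₂.comp (Sinv.comp S₂))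
      - ((p : ℂ) • S₁ + (q : ℂ) • S₂)) f, f⟫_ℂ).re
      = (⟪Sinv (S₁ f), S₁ f⟫_ℂ).re + (⟪Sinv (S₂ f), S₂ f⟫_ℂ).re
        - (p * (⟪S₁ f, f⟫_ℂ).re + q * (⟪S₂ f, f⟫_ℂ).re) := by
    simp only [sub_apply, add_apply, ContinuousLinearMap.comp_apply, smul_apply,
      inner_sub_left, inner_add_left, inner_smul_left, hS₁.inner_left_eq_inner_right (Sinv (S₁ f)),
      hS₂.inner_left_eq_inner_right (Sinv (S₂ f)), Complex.conj_ofReal, Complex.sub_re,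
      Complex.add_re, Complex.re_ofReal_mul]
  rw [hexpand, sub_nonneg]
  exact mul_add_mul_le_add_of_sq_le_mul hpq (hS1_pos f) (hS2_pos f)
    (hSinv.re_inner_nonneg_left _) (hSinv.re_inner_nonneg_left _)
    (hs ▸ hS.re_inner_sq_le_inverse hinv1 hinv2 S₁ f)
    (hs ▸ hS.re_inner_sq_le_inverse hinv1 hinv2 S₂ f)

theorem stmt6 {H : Type*} [NormedAddCommGroup H] [InnerProductSpace ℂ H] [CompleteSpace H]
    (S Sinv S₁ S₂ : H →L[ℂ] H)
    (hS_sa : IsSelfAdjoint S) (hS1_sa : IsSelfAdjoint S₁) (hS2_sa : IsSelfAdjoint S₂)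
    (hS_pd : ∃ c > 0, ∀ f : H, c * ‖f‖ ^ 2 ≤ (⟪S f, f⟫_ℂ).re)
    (hinv1 : S.comp Sinv = ContinuousLinearMap.id ℂ H)
    (hinv2 : Sinv.comp S = ContinuousLinearMap.id ℂ H)
    (hS1_pos : ∀ f : H, 0 ≤ (⟪S₁ f, f⟫_ℂ).re) (hS2_pos : ∀ f : H, 0 ≤ (⟪S₂ f, f⟫_ℂ).re)
    (hsum : S = S₁ + S₂)
    (p q : ℝ) (hpq : ∀ a ∈ Set.Icc (0:ℝ) 1, 0 ≤ a ^ 2 + a * ((q - p) / 2 - 1) + (1 - q) / 2) :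
    (∀ f : H, 0 ≤ (⟪((S₁.comp (Sinv.comp S₁) + S₂.comp (Sinv.comp S₂)) - ((p : ℂ) • S₁ + (q : ℂ) • S₂)) f, f⟫_ℂ).re) :=
  stmt6_general S Sinv S₁ S₂ hS1_sa hS2_sa hinv1 hinv2 hS1_pos hS2_pos hsum p q hpq
end

section
/- Let S be bounded, self-adjoint, positive definite and invertible, and S₁, S₂ bounded, self-adjoint, positive semidefinite with S = S₁ + S₂. Then for any λ ∈ ℝ, (λ − λ²/4)·S₁ + (1 − λ²/4)·S₂ ≤ S₂ + S₁ S⁻¹ S₁ ≤ S. -/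
/-! With `g = S⁻¹ S₁ f` one has `⟪S₁ S⁻¹ S₁ f, f⟫ = ⟪S g, g⟫` and `⟪S g, f⟫ = ⟪S₁ f, f⟫`.
The lower bound is positivity of `S` at `g - (λ/2) f`; the upper bound is positivity of `S₁` at `f - g` together with
positivity of `S₂` at `g`. -/

open scoped InnerProductSpace

namespace ContinuousLinearMap

variable {𝕜 E : Type*} [RCLike 𝕜] [NormedAddCommGroup E] [InnerProductSpace 𝕜 E]

open RCLike

theorem IsPositive.two_mul_re_inner_le {A : E →L[𝕜] E} (hA : A.IsPositive) (x y : E) (t : ℝ) :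
    2 * t * re ⟪A x, y⟫_𝕜 ≤ re ⟪A x, x⟫_𝕜 + t ^ 2 * re ⟪A y, y⟫_𝕜 := by
  have hsymm : re ⟪A y, x⟫_𝕜 = re ⟪A x, y⟫_𝕜 := by
    rw [hA.inner_left_eq_inner_right, inner_re_symm]
  have := hA.re_inner_nonneg_left (x - (t : 𝕜) • y)
  simp only [map_sub, map_smul, inner_sub_left, inner_sub_right, inner_smul_left,
    inner_smul_right, conj_ofReal, re_ofReal_mul, hsymm] at this
  linear_combination this

variable {S T S₁ S₂ : E →L[𝕜] E}

theorem re_inner_comp_rightInverse_comp (hS₁ : S₁.IsSymmetric) (hST : S ∘L T = .id 𝕜 E)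
    (f : E) : re ⟪(S₁ ∘L T ∘L S₁) f, f⟫_𝕜 = re ⟪S (T (S₁ f)), T (S₁ f)⟫_𝕜 := by
  have hg : S (T (S₁ f)) = S₁ f := congr($hST (S₁ f))
  rw [comp_apply, comp_apply, hg, inner_re_symm]
  exact congrArg re (hS₁ f _).symm

theorem mul_re_inner_le_re_inner_comp_rightInverse_comp (hS : S.IsPositive)
    (hS₁ : S₁.IsSymmetric) (hST : S ∘L T = .id 𝕜 E) (f : E) (l : ℝ) :
    l * re ⟪S₁ f, f⟫_𝕜 ≤ re ⟪(S₁ ∘L T ∘L S₁) f, f⟫_𝕜 + l ^ 2 / 4 * re ⟪S f, f⟫_𝕜 := by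
  rw [re_inner_comp_rightInverse_comp hS₁ hST]
  set g := T (S₁ f)
  have hcross : re ⟪S g, f⟫_𝕜 = re ⟪S₁ f, f⟫_𝕜 := by rw [show S g = S₁ f from congr($hST (S₁ f))]
  linear_combination hS.two_mul_re_inner_le g f (l / 2) - l * hcross

theorem re_inner_comp_rightInverse_comp_le (hS₁ : S₁.IsPositive)
    (hS₂ : ∀ x, 0 ≤ re ⟪S₂ x, x⟫_𝕜) (hsum : S = S₁ + S₂) (hST : S ∘L T = .id 𝕜 E) (f : E) :
    re ⟪(S₁ ∘L T ∘L S₁) f, f⟫_𝕜 ≤ re ⟪S₁ f, f⟫_𝕜 := by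
  rw [re_inner_comp_rightInverse_comp hS₁.isSymmetric hST]
  set g := T (S₁ f)
  have hcross : re ⟪S₁ f, g⟫_𝕜 = re ⟪S₁ g, g⟫_𝕜 + re ⟪S₂ g, g⟫_𝕜 := by
    rw [← show S g = S₁ f from congr($hST (S₁ f)), hsum, add_apply, inner_add_left, map_add]
  have hsplit : re ⟪S g, g⟫_𝕜 = re ⟪S₁ g, g⟫_𝕜 + re ⟪S₂ g, g⟫_𝕜 := by
    rw [hsum, add_apply, inner_add_left, map_add]
  linarith [hS₁.two_mul_re_inner_le f g 1, hS₂ g]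

end ContinuousLinearMap

open ContinuousLinearMap in
theorem stmt7_general {H : Type*} [NormedAddCommGroup H] [InnerProductSpace ℂ H] [CompleteSpace H]
    (S Sinv S₁ S₂ : H →L[ℂ] H)
    (hS_sa : IsSelfAdjoint S) (hS1_sa : IsSelfAdjoint S₁)
    (hS_pd : ∃ c > 0, ∀ f : H, c * ‖f‖ ^ 2 ≤ (⟪S f, f⟫_ℂ).re)
    (hinv1 : S.comp Sinv = ContinuousLinearMap.id ℂ H)
    (hS1_pos : ∀ f : H, 0 ≤ (⟪S₁ f, f⟫_ℂ).re) (hS2_pos : ∀ f : H, 0 ≤ (⟪S₂ f, f⟫_ℂ).re)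
    (hsum : S = S₁ + S₂) (l : ℝ) :
    (∀ f : H, 0 ≤ (⟪((S₂ + S₁.comp (Sinv.comp S₁)) - (((l - l ^ 2 / 4 : ℝ) : ℂ) • S₁ + ((1 - l ^ 2 / 4 : ℝ) : ℂ) • S₂)) f, f⟫_ℂ).re) ∧
    (∀ f : H, 0 ≤ (⟪((S) - (S₂ + S₁.comp (Sinv.comp S₁))) f, f⟫_ℂ).re) := by
  obtain ⟨c, hc, hS_coercive⟩ := hS_pd
  have hS : S.IsPositive :=
    isPositive_def'.2 ⟨hS_sa, fun f => (by positivity : 0 ≤ c * ‖f‖ ^ 2).trans (hS_coercive f)⟩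
  have hS₁ : S₁.IsPositive := isPositive_def'.2 ⟨hS1_sa, hS1_pos⟩
  have hsplit (f : H) : (⟪S f, f⟫_ℂ).re = (⟪S₁ f, f⟫_ℂ).re + (⟪S₂ f, f⟫_ℂ).re := by
    rw [hsum, add_apply, inner_add_left, Complex.add_re]
  refine ⟨fun f => ?_, fun f => ?_⟩
  · have hlower := mul_re_inner_le_re_inner_comp_rightInverse_comp hS hS₁.isSymmetric hinv1 f l
    simp only [sub_apply, add_apply, smul_apply, inner_sub_left, inner_add_left, inner_smul_left,
      Complex.conj_ofReal, Complex.sub_re, Complex.add_re, Complex.re_ofReal_mul,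
      RCLike.re_to_complex] at hlower ⊢
    linear_combination hlower + l ^ 2 / 4 * hsplit f
  · have hupper := re_inner_comp_rightInverse_comp_le hS₁ hS2_pos hsum hinv1 f
    simp only [sub_apply, add_apply, inner_sub_left, inner_add_left, Complex.sub_re,
      Complex.add_re, RCLike.re_to_complex] at hupper ⊢
    linarith [hsplit f]

theorem stmt7 {H : Type*} [NormedAddCommGroup H] [InnerProductSpace ℂ H] [CompleteSpace H]
    (S Sinv S₁ S₂ : H →L[ℂ] H)
    (hS_sa : IsSelfAdjoint S) (hS1_sa : IsSelfAdjoint S₁) (hS2_sa : IsSelfAdjoint S₂)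
    (hS_pd : ∃ c > 0, ∀ f : H, c * ‖f‖ ^ 2 ≤ (⟪S f, f⟫_ℂ).re)
    (hinv1 : S.comp Sinv = ContinuousLinearMap.id ℂ H)
    (hinv2 : Sinv.comp S = ContinuousLinearMap.id ℂ H)
    (hS1_pos : ∀ f : H, 0 ≤ (⟪S₁ f, f⟫_ℂ).re) (hS2_pos : ∀ f : H, 0 ≤ (⟪S₂ f, f⟫_ℂ).re)
    (hsum : S = S₁ + S₂) (l : ℝ) :
    (∀ f : H, 0 ≤ (⟪((S₂ + S₁.comp (Sinv.comp S₁)) - (((l - l ^ 2 / 4 : ℝ) : ℂ) • S₁ + ((1 - l ^ 2 / 4 : ℝ) : ℂ) • S₂)) f, f⟫_ℂ).re) ∧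
    (∀ f : H, 0 ≤ (⟪((S) - (S₂ + S₁.comp (Sinv.comp S₁))) f, f⟫_ℂ).re) :=
  stmt7_general S Sinv S₁ S₂ hS_sa hS1_sa hS_pd hinv1 hS1_pos hS2_pos hsum l
end

section
/- Let S be bounded, self-adjoint, positive definite and invertible, and S₁, S₂ bounded, self-adjoint, positive semidefinite with S = S₁ + S₂. Then for any λ ∈ ℝ, 0 ≤ S₁ − S₁ S⁻¹ S₁ ≤ (λ − 1)·S₂ + (1 − λ/2)²·S. -/
/-!
Write `g = S⁻¹ S₁ f`, so that `⟪S₁ S⁻¹ S₁ f, f⟫ = ⟪S g, g⟫ = ⟪S₁ f, g⟫`; both claims come from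
completing a square. Since `S₁ ≤ S`, the inequality `0 ≤ ⟪S₁ (f - g), f - g⟫` gives
`⟪S₁ S⁻¹ S₁ f, f⟫ ≤ ⟪S₁ f, f⟫`. Conversely `0 ≤ ⟪S (g - h), g - h⟫` says that
`⟪S₁ S⁻¹ S₁ f, f⟫ ≥ 2 Re ⟪S₁ f, h⟫ - ⟪S h, h⟫` for every `h`; at `h = (λ/2) f` this is exactly the
second claim once `S₂ = S - S₁` is substituted.
-/

open scoped InnerProductSpace ComplexConjugate

open RCLike

namespace LinearMap

variable {𝕜 E : Type*} [RCLike 𝕜] [NormedAddCommGroup E] [InnerProductSpace 𝕜 E]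
  {A S : E →ₗ[𝕜] E} {f g : E}

theorem IsSymmetric.re_inner_map_sub_sub (hS : S.IsSymmetric) (x y : E) :
    re ⟪S (x - y), x - y⟫_𝕜 = re ⟪S x, x⟫_𝕜 - 2 * re ⟪S x, y⟫_𝕜 + re ⟪S y, y⟫_𝕜 := by
  have hyx : re ⟪S y, x⟫_𝕜 = re ⟪S x, y⟫_𝕜 := by rw [hS, inner_re_symm]
  simp only [map_sub, inner_sub_left, inner_sub_right, hyx]
  ring

theorem IsSymmetric.re_inner_map_eq_of_map_eq (hA : A.IsSymmetric) (hg : S g = A f) :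
    re ⟪A g, f⟫_𝕜 = re ⟪S g, g⟫_𝕜 := by
  rw [hA, ← hg, inner_re_symm]

theorem re_inner_map_le_of_map_eq (hA : A.IsPositive)
    (hAS : ∀ x, re ⟪A x, x⟫_𝕜 ≤ re ⟪S x, x⟫_𝕜) (hg : S g = A f) :
    re ⟪A g, f⟫_𝕜 ≤ re ⟪A f, f⟫_𝕜 := by
  have hsq := hA.isSymmetric.re_inner_map_sub_sub f g
  have hfg : re ⟪A f, g⟫_𝕜 = re ⟪A g, f⟫_𝕜 := by rw [hA.isSymmetric, inner_re_symm]
  have hschur := hA.isSymmetric.re_inner_map_eq_of_map_eq hg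
  linarith [hA.re_inner_nonneg_left (f - g), hAS g]

theorem sub_re_inner_map_le_of_map_eq (hS : S.IsPositive) (hA : A.IsSymmetric) (hg : S g = A f)
    (h : E) : 2 * re ⟪A f, h⟫_𝕜 - re ⟪S h, h⟫_𝕜 ≤ re ⟪A g, f⟫_𝕜 := by
  have hsq := hS.isSymmetric.re_inner_map_sub_sub g h
  have hcross : re ⟪S g, h⟫_𝕜 = re ⟪A f, h⟫_𝕜 := by rw [hg]
  linarith [hS.re_inner_nonneg_left (g - h), hA.re_inner_map_eq_of_map_eq hg]

theorem sub_re_inner_map_smul_le_of_map_eq (hS : S.IsPositive) (hA : A.IsSymmetric)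
    (hg : S g = A f) (t : ℝ) :
    2 * t * re ⟪A f, f⟫_𝕜 - t ^ 2 * re ⟪S f, f⟫_𝕜 ≤ re ⟪A g, f⟫_𝕜 := by
  have := sub_re_inner_map_le_of_map_eq hS hA hg ((t : 𝕜) • f)
  simp only [map_smul, inner_smul_left, inner_smul_right, conj_ofReal, ← mul_assoc,
    ← ofReal_mul, re_ofReal_mul] at this
  linarith

end LinearMap

theorem stmt8_general {H : Type*} [NormedAddCommGroup H] [InnerProductSpace ℂ H] [CompleteSpace H]
    (S Sinv S₁ S₂ : H →L[ℂ] H)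
    (hS_sa : IsSelfAdjoint S) (hS1_sa : IsSelfAdjoint S₁)
    (hinv1 : S.comp Sinv = ContinuousLinearMap.id ℂ H)
    (hS1_pos : ∀ f : H, 0 ≤ (⟪S₁ f, f⟫_ℂ).re) (hS2_pos : ∀ f : H, 0 ≤ (⟪S₂ f, f⟫_ℂ).re)
    (hsum : S = S₁ + S₂) (l : ℝ) :
    (∀ f : H, 0 ≤ (⟪(S₁ - (S₁.comp (Sinv.comp S₁))) f, f⟫_ℂ).re) ∧
    (∀ f : H, 0 ≤ (⟪((((l - 1 : ℝ) : ℂ) • S₂ + (((1 - l / 2) ^ 2 : ℝ) : ℂ) • S) - (S₁ - (S₁.comp (Sinv.comp S₁)))) f, f⟫_ℂ).re) := by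
  have hsplit (f : H) : (⟪S f, f⟫_ℂ).re = (⟪S₁ f, f⟫_ℂ).re + (⟪S₂ f, f⟫_ℂ).re := by
    rw [hsum, add_apply, inner_add_left, Complex.add_re]
  have hS₁ : (S₁ : H →ₗ[ℂ] H).IsPositive := ⟨hS1_sa.isSymmetric, hS1_pos⟩
  have hS : (S : H →ₗ[ℂ] H).IsPositive :=
    ⟨hS_sa.isSymmetric, fun f =>
      (by linarith [hsplit f, hS1_pos f, hS2_pos f] : 0 ≤ (⟪S f, f⟫_ℂ).re)⟩
  have hg (f : H) : S (Sinv (S₁ f)) = S₁ f := congr($hinv1 (S₁ f))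
  refine ⟨fun f => ?_, fun f => ?_⟩
  · have hle : (⟪S₁ (Sinv (S₁ f)), f⟫_ℂ).re ≤ (⟪S₁ f, f⟫_ℂ).re :=
      LinearMap.re_inner_map_le_of_map_eq hS₁
        (fun x => (by linarith [hsplit x, hS2_pos x] : (⟪S₁ x, x⟫_ℂ).re ≤ (⟪S x, x⟫_ℂ).re)) (hg f)
    simp only [sub_apply, ContinuousLinearMap.comp_apply, inner_sub_left, Complex.sub_re]
    linarith
  · have hle : 2 * (l / 2) * (⟪S₁ f, f⟫_ℂ).re - (l / 2) ^ 2 * (⟪S f, f⟫_ℂ).re ≤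
        (⟪S₁ (Sinv (S₁ f)), f⟫_ℂ).re :=
      LinearMap.sub_re_inner_map_smul_le_of_map_eq hS hS₁.isSymmetric (hg f) (l / 2)
    simp only [sub_apply, add_apply, smul_apply, ContinuousLinearMap.comp_apply, inner_sub_left,
      inner_add_left, inner_smul_left, Complex.sub_re, Complex.add_re, Complex.conj_ofReal,
      Complex.re_ofReal_mul]
    linear_combination hle + ((l / 2) ^ 2 - (1 - l / 2) ^ 2) * hsplit f

theorem stmt8 {H : Type*} [NormedAddCommGroup H] [InnerProductSpace ℂ H] [CompleteSpace H]
    (S Sinv S₁ S₂ : H →L[ℂ] H)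
    (hS_sa : IsSelfAdjoint S) (hS1_sa : IsSelfAdjoint S₁) (hS2_sa : IsSelfAdjoint S₂)
    (hS_pd : ∃ c > 0, ∀ f : H, c * ‖f‖ ^ 2 ≤ (⟪S f, f⟫_ℂ).re)
    (hinv1 : S.comp Sinv = ContinuousLinearMap.id ℂ H)
    (hinv2 : Sinv.comp S = ContinuousLinearMap.id ℂ H)
    (hS1_pos : ∀ f : H, 0 ≤ (⟪S₁ f, f⟫_ℂ).re) (hS2_pos : ∀ f : H, 0 ≤ (⟪S₂ f, f⟫_ℂ).re)
    (hsum : S = S₁ + S₂) (l : ℝ) :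
    (∀ f : H, 0 ≤ (⟪(S₁ - (S₁.comp (Sinv.comp S₁))) f, f⟫_ℂ).re) ∧
    (∀ f : H, 0 ≤ (⟪((((l - 1 : ℝ) : ℂ) • S₂ + (((1 - l / 2) ^ 2 : ℝ) : ℂ) • S) - (S₁ - (S₁.comp (Sinv.comp S₁)))) f, f⟫_ℂ).re) :=
  stmt8_general S Sinv S₁ S₂ hS_sa hS1_sa hinv1 hS1_pos hS2_pos hsum l
end

section
/- Let S be bounded, self-adjoint, positive definite and invertible, and S₁, S₂ bounded, self-adjoint, positive semidefinite with S = S₁ + S₂. Then for any λ ∈ ℝ, (2λ − λ²/2 − 1)·S₁ + (1 − λ²/2)·S₂ ≤ S₁ S⁻¹ S₁ + S₂ S⁻¹ S₂ ≤ S. -/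
open scoped InnerProductSpace ComplexConjugate

/-!
Write `t` for the inverse of `s = s₁ + s₂`. From `t s₁ + t s₂ = 1` one gets
`s - (s₁ t s₁ + s₂ t s₂) = 2 s₂ t s₁`, and the parallel sum `s₂ t s₁` equals
`(t s₁)⋆ s₂ (t s₁) + (t s₂)⋆ s₁ (t s₂)`, hence is positive. For the lower bound the difference is
`2 c t c` with the self-adjoint `c = (λ/2) s - s₁`, positive because `t = t⋆ s t` is.
Only the star-ordered ring structure of the operators is needed.
-/

section StarRing

variable {R : Type*} [Ring R] [StarRing R] {s t : R}

theorem IsSelfAdjoint.of_mul_eq_one (hs : IsSelfAdjoint s) (h : s * t = 1) :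
    IsSelfAdjoint t := by
  have hleft : star t * s = 1 := by rw [← hs.star_eq, ← star_mul, h, star_one]
  calc star t = star t * (s * t) := by rw [h, mul_one]
    _ = t := by rw [← mul_assoc, hleft, one_mul]

theorem IsSelfAdjoint.mul_eq_one_comm (hs : IsSelfAdjoint s) (h : s * t = 1) : t * s = 1 := by
  simpa [hs.star_eq, (hs.of_mul_eq_one h).star_eq] using congrArg star h

end StarRing

section Ring

variable {R : Type*} [Ring R] {s s₁ s₂ t : R}

theorem mul_mul_add_mul_mul_eq_left (hs : s = s₁ + s₂) (h' : t * s = 1) (a : R) :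
    a * t * s₁ + a * t * s₂ = a := by
  rw [← mul_add, ← hs, mul_assoc, h', mul_one]

theorem mul_mul_add_mul_mul_eq_right (hs : s = s₁ + s₂) (h : s * t = 1) (a : R) :
    s₁ * t * a + s₂ * t * a = a := by
  rw [← add_mul, ← add_mul, ← hs, h, one_mul]

theorem sub_add_mul_mul_eq (hs : s = s₁ + s₂) (h' : t * s = 1) :
    s - (s₁ * t * s₁ + s₂ * t * s₂) = s₁ * t * s₂ + s₂ * t * s₁ := by
  linear_combination (norm := module) hs - mul_mul_add_mul_mul_eq_left hs h' s₁ -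
    mul_mul_add_mul_mul_eq_left hs h' s₂

theorem mul_mul_comm_of_eq_add (hs : s = s₁ + s₂) (h : s * t = 1) (h' : t * s = 1) :
    s₁ * t * s₂ = s₂ * t * s₁ := by
  linear_combination (norm := module)
    mul_mul_add_mul_mul_eq_left hs h' s₁ - mul_mul_add_mul_mul_eq_right hs h s₁

theorem mul_mul_eq_star_mul_mul_add [StarRing R] (hs : s = s₁ + s₂) (h : s * t = 1)
    (h' : t * s = 1) (ht : IsSelfAdjoint t) (hs₁ : IsSelfAdjoint s₁) (hs₂ : IsSelfAdjoint s₂) :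
    s₂ * t * s₁ = star (t * s₁) * s₂ * (t * s₁) + star (t * s₂) * s₁ * (t * s₂) := by
  calc s₂ * t * s₁ = s₂ * t * s₁ * t * s₁ + s₂ * t * s₁ * t * s₂ :=
        (mul_mul_add_mul_mul_eq_left hs h' _).symm
    _ = s₁ * t * s₂ * t * s₁ + s₂ * t * s₁ * t * s₂ := by
      rw [mul_mul_comm_of_eq_add hs h h']
    _ = _ := by simp only [star_mul, ht.star_eq, hs₁.star_eq, hs₂.star_eq, mul_assoc]

theorem mul_mul_add_mul_mul_eq [Algebra ℝ R] (hs : s = s₁ + s₂) (h : s * t = 1) (h' : t * s = 1)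
    (l : ℝ) :
    s₁ * t * s₁ + s₂ * t * s₂ = (2 * l - l ^ 2 / 2 - 1) • s₁ + (1 - l ^ 2 / 2) • s₂ +
      2 • (((l / 2) • s - s₁) * t * ((l / 2) • s - s₁)) := by
  have e₁ := mul_mul_add_mul_mul_eq_left hs h' s₁
  have e₂ := mul_mul_add_mul_mul_eq_right hs h s₁
  have e₃ := mul_mul_add_mul_mul_eq_left hs h' s₂
  subst hs
  simp only [add_mul, mul_add, sub_mul, mul_sub, smul_mul_assoc, mul_smul_comm, smul_add]
  linear_combination (norm := module)
    (l - l ^ 2 / 2) • e₁ + (l - 1) • e₂ + (1 - l ^ 2 / 2) • e₃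

end Ring

section StarOrderedRing

variable {R : Type*} [Ring R] [PartialOrder R] [StarRing R] [StarOrderedRing R] {s s₁ s₂ t : R}

theorem nonneg_of_mul_eq_one (hs : 0 ≤ s) (h : s * t = 1) : 0 ≤ t := by
  have ht := hs.isSelfAdjoint.of_mul_eq_one h
  simpa [ht.star_eq, mul_assoc, h] using star_left_conjugate_nonneg hs t

theorem mul_mul_nonneg_of_eq_add (hs₁ : 0 ≤ s₁) (hs₂ : 0 ≤ s₂) (hs : s = s₁ + s₂)
    (h : s * t = 1) : 0 ≤ s₂ * t * s₁ := by
  have hsa : IsSelfAdjoint s := hs ▸ (add_nonneg hs₁ hs₂).isSelfAdjoint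
  rw [mul_mul_eq_star_mul_mul_add hs h (hsa.mul_eq_one_comm h) (hsa.of_mul_eq_one h)
    hs₁.isSelfAdjoint hs₂.isSelfAdjoint]
  exact add_nonneg (star_left_conjugate_nonneg hs₂ _) (star_left_conjugate_nonneg hs₁ _)

theorem mul_mul_add_mul_mul_le (hs₁ : 0 ≤ s₁) (hs₂ : 0 ≤ s₂) (hs : s = s₁ + s₂)
    (h : s * t = 1) : s₁ * t * s₁ + s₂ * t * s₂ ≤ s := by
  have hsa : IsSelfAdjoint s := hs ▸ (add_nonneg hs₁ hs₂).isSelfAdjoint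
  have h' := hsa.mul_eq_one_comm h
  have hp := mul_mul_nonneg_of_eq_add hs₁ hs₂ hs h
  rw [← sub_nonneg, sub_add_mul_mul_eq hs h', mul_mul_comm_of_eq_add hs h h']
  exact add_nonneg hp hp

theorem le_mul_mul_add_mul_mul [Algebra ℝ R] [StarModule ℝ R] (hs₁ : IsSelfAdjoint s₁)
    (hs : 0 ≤ s) (hsum : s = s₁ + s₂) (h : s * t = 1) (l : ℝ) :
    (2 * l - l ^ 2 / 2 - 1) • s₁ + (1 - l ^ 2 / 2) • s₂ ≤ s₁ * t * s₁ + s₂ * t * s₂ := by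
  have hc : IsSelfAdjoint ((l / 2) • s - s₁) :=
    ((IsSelfAdjoint.all (l / 2)).smul hs.isSelfAdjoint).sub hs₁
  rw [mul_mul_add_mul_mul_eq hsum h (hs.isSelfAdjoint.mul_eq_one_comm h) l]
  exact le_add_of_nonneg_right (nsmul_nonneg (hc.conjugate_nonneg (nonneg_of_mul_eq_one hs h)) 2)

end StarOrderedRing

theorem stmt9_general {H : Type*} [NormedAddCommGroup H] [InnerProductSpace ℂ H] [CompleteSpace H]
    (S Sinv S₁ S₂ : H →L[ℂ] H)
    (hS1_sa : IsSelfAdjoint S₁) (hS2_sa : IsSelfAdjoint S₂)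
    (hinv1 : S.comp Sinv = ContinuousLinearMap.id ℂ H)
    (hS1_pos : ∀ f : H, 0 ≤ (⟪S₁ f, f⟫_ℂ).re) (hS2_pos : ∀ f : H, 0 ≤ (⟪S₂ f, f⟫_ℂ).re)
    (hsum : S = S₁ + S₂) (l : ℝ) :
    (∀ f : H, 0 ≤ (⟪((S₁.comp (Sinv.comp S₁) + S₂.comp (Sinv.comp S₂)) - (((2 * l - l ^ 2 / 2 - 1 : ℝ) : ℂ) • S₁ + ((1 - l ^ 2 / 2 : ℝ) : ℂ) • S₂)) f, f⟫_ℂ).re) ∧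
    (∀ f : H, 0 ≤ (⟪((S) - (S₁.comp (Sinv.comp S₁) + S₂.comp (Sinv.comp S₂))) f, f⟫_ℂ).re) := by
  have h₁ : 0 ≤ S₁ := (ContinuousLinearMap.nonneg_iff_isPositive S₁).2 <|
    ContinuousLinearMap.isPositive_def'.2 ⟨hS1_sa, hS1_pos⟩
  have h₂ : 0 ≤ S₂ := (ContinuousLinearMap.nonneg_iff_isPositive S₂).2 <|
    ContinuousLinearMap.isPositive_def'.2 ⟨hS2_sa, hS2_pos⟩
  have hinv : S * Sinv = 1 := hinv1
  have lower := le_mul_mul_add_mul_mul hS1_sa (hsum ▸ add_nonneg h₁ h₂) hsum hinv l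
  have upper := mul_mul_add_mul_mul_le h₁ h₂ hsum hinv
  rw [Complex.coe_smul, Complex.coe_smul]
  exact ⟨((ContinuousLinearMap.le_def _ _).1 lower).re_inner_nonneg_left,
    ((ContinuousLinearMap.le_def _ _).1 upper).re_inner_nonneg_left⟩

theorem stmt9 {H : Type*} [NormedAddCommGroup H] [InnerProductSpace ℂ H] [CompleteSpace H]
    (S Sinv S₁ S₂ : H →L[ℂ] H)
    (hS_sa : IsSelfAdjoint S) (hS1_sa : IsSelfAdjoint S₁) (hS2_sa : IsSelfAdjoint S₂)
    (hS_pd : ∃ c > 0, ∀ f : H, c * ‖f‖ ^ 2 ≤ (⟪S f, f⟫_ℂ).re)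
    (hinv1 : S.comp Sinv = ContinuousLinearMap.id ℂ H)
    (hinv2 : Sinv.comp S = ContinuousLinearMap.id ℂ H)
    (hS1_pos : ∀ f : H, 0 ≤ (⟪S₁ f, f⟫_ℂ).re) (hS2_pos : ∀ f : H, 0 ≤ (⟪S₂ f, f⟫_ℂ).re)
    (hsum : S = S₁ + S₂) (l : ℝ) :
    (∀ f : H, 0 ≤ (⟪((S₁.comp (Sinv.comp S₁) + S₂.comp (Sinv.comp S₂)) - (((2 * l - l ^ 2 / 2 - 1 : ℝ) : ℂ) • S₁ + ((1 - l ^ 2 / 2 : ℝ) : ℂ) • S₂)) f, f⟫_ℂ).re) ∧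
    (∀ f : H, 0 ≤ (⟪((S) - (S₁.comp (Sinv.comp S₁) + S₂.comp (Sinv.comp S₂))) f, f⟫_ℂ).re) :=
  stmt9_general S Sinv S₁ S₂ hS1_sa hS2_sa hinv1 hS1_pos hS2_pos hsum l
end
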